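/- Let (Ω, ρ) be a set with a symmetric function ρ: Ω × Ω → [0,∞) vanishing exactly on the diagonal, with topology defined by declaring A open iff every point of A contains some ρ-ball around it. Then the following are equivalent: (i) all balls B(x,r) = {y : ρ(x,y) < r} are open and the closure of each B(x,r) is contained in {y : ρ(x,y) ≤ r}; (ii) for every fixed y ∈ Ω, the function x ↦ ρ(x,y) is continuous. -/
import Mathlib


open MeasureTheory Set ENNReal

/-- The topology on `Ω` induced by a (quasi)distance-like function `ρ`:
a set `A` is open iff every point of `A` has a `ρ`-ball around it inside `A`. -/
def ballTopology {Ω : Type*} (ρ : Ω → Ω → ℝ) : TopologicalSpace Ω where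
  IsOpen A := ∀ x ∈ A, ∃ r > 0, {y | ρ x y < r} ⊆ A
  isOpen_univ := fun _ _ => ⟨1, one_pos, fun _ _ => trivial⟩
  isOpen_inter := fun A B hA hB x hx => by
    obtain ⟨r₁, hr₁, h₁⟩ := hA x hx.1
    obtain ⟨r₂, hr₂, h₂⟩ := hB x hx.2
    refine ⟨min r₁ r₂, lt_min hr₁ hr₂, fun y hy => ?_⟩
    have hy' : ρ x y < min r₁ r₂ := hy
    exact ⟨h₁ (show ρ x y < r₁ from lt_of_lt_of_le hy' (min_le_left _ _)),
      h₂ (show ρ x y < r₂ from lt_of_lt_of_le hy' (min_le_right _ _))⟩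
  isOpen_sUnion := fun S hS x hx => by
    obtain ⟨A, hA, hxA⟩ := hx
    obtain ⟨r, hr, h⟩ := hS A hA x hxA
    exact ⟨r, hr, fun y hy => ⟨A, hA, h hy⟩⟩

/-- A locally homogeneous space in the sense of Bramanti–Zhu. -/
structure LocHom (Ω : Type*) [MeasurableSpace Ω] where
  ρ : Ω → Ω → ℝ
  μ : Measure Ω
  On : ℕ → Set Ω
  ε : ℕ → ℝ
  Bc : ℕ → ℝ
  Cc : ℕ → ℝ≥0∞
  ρ_nonneg : ∀ x y, 0 ≤ ρ x y
  ρ_eq_zero_iff : ∀ x y, ρ x y = 0 ↔ x = y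
  ρ_symm : ∀ x y, ρ x y = ρ y x
  ρ_cont : ∀ y, @Continuous Ω ℝ (ballTopology ρ) _ fun x => ρ x y
  On_mono : ∀ n, On n ⊆ On (n + 1)
  On_iUnion : (⋃ n, On n) = univ
  On_meas : ∀ n, MeasurableSet (On n)
  ε_pos : ∀ n, 0 < ε n
  nbhd_subset : ∀ n, ∀ y ∈ On n, ∀ x, ρ x y < 2 * ε n → x ∈ On (n + 1)
  Bc_ge_one : ∀ n, 1 ≤ Bc n
  triangle : ∀ n, ∀ x ∈ On n, ∀ y ∈ On n, ∀ z ∈ On n,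
    ρ x y ≤ Bc n * (ρ x z + ρ z y)
  Cc_gt_one : ∀ n, 1 < Cc n
  doubling : ∀ n, ∀ x ∈ On n, ∀ r : ℝ, 0 < r → r ≤ ε n →
    0 < μ {y | ρ x y < r} ∧
    μ {y | ρ x y < 2 * r} ≤ Cc n * μ {y | ρ x y < r} ∧
    μ {y | ρ x y < 2 * r} < ⊤

/-- The ball of `ρ` with center `x` and radius `r`. -/
def LocHom.ball {Ω : Type*} [MeasurableSpace Ω] (h : LocHom Ω) (x : Ω) (r : ℝ) : Set Ω :=
  {y | h.ρ x y < r}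


/-- the two topological conditions (H2)(a)+(b) are equivalent to
continuity of `x ↦ ρ x y` for every fixed `y`. -/
theorem stmt0 {Ω : Type*} (ρ : Ω → Ω → ℝ)
    (hnonneg : ∀ x y, 0 ≤ ρ x y)
    (hzero : ∀ x y, ρ x y = 0 ↔ x = y)
    (hsymm : ∀ x y, ρ x y = ρ y x) :
    (∀ (x : Ω) (r : ℝ), 0 < r →
        @IsOpen Ω (ballTopology ρ) {y | ρ x y < r} ∧
        @closure Ω (ballTopology ρ) {y | ρ x y < r} ⊆ {y | ρ x y ≤ r}) ↔
      ∀ y : Ω, @Continuous Ω ℝ (ballTopology ρ) _ (fun x => ρ x y) := by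
  constructor
  · intro H y
    letI : TopologicalSpace Ω := ballTopology ρ
    rw [continuous_def]
    intro s hs
    intro x₀ hx₀
    simp only [Set.mem_preimage] at hx₀
    obtain ⟨ε, hε, hball⟩ := Metric.isOpen_iff.1 hs _ hx₀
    have ha0 : 0 ≤ ρ x₀ y := hnonneg x₀ y
    by_cases hcase : ρ x₀ y ≤ ε / 2
    · obtain ⟨h₁open, -⟩ := H y (ρ x₀ y + ε) (by linarith)
      have hx₀U : x₀ ∈ {x | ρ y x < ρ x₀ y + ε} := by
        simp only [Set.mem_setOf_eq, hsymm y x₀]; linarith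
      obtain ⟨r, hr, hsub⟩ := h₁open x₀ hx₀U
      refine ⟨r, hr, fun z hz => hball ?_⟩
      have h1 : ρ y z < ρ x₀ y + ε := hsub hz
      have h2 : 0 ≤ ρ z y := hnonneg z y
      have h3 : ρ y z = ρ z y := hsymm y z
      simp only [Set.mem_preimage, Metric.mem_ball, Real.dist_eq, abs_lt]
      constructor <;> linarith
    · push_neg at hcase
      have hr₀ : 0 < ρ x₀ y - ε / 2 := by linarith
      obtain ⟨h₂open, hcl⟩ := H y (ρ x₀ y - ε / 2) hr₀
      obtain ⟨h₁open, -⟩ := H y (ρ x₀ y + ε) (by linarith)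
      have hUopen : IsOpen ({x | ρ y x < ρ x₀ y + ε} ∩
          (closure {x | ρ y x < ρ x₀ y - ε / 2})ᶜ) :=
        h₁open.inter (isClosed_closure.isOpen_compl)
      have hx₀U : x₀ ∈ {x | ρ y x < ρ x₀ y + ε} ∩
          (closure {x | ρ y x < ρ x₀ y - ε / 2})ᶜ := by
        constructor
        · simp only [Set.mem_setOf_eq, hsymm y x₀]; linarith
        · intro hmem
          have := hcl hmem
          simp only [Set.mem_setOf_eq, hsymm y x₀] at this
          linarith
      obtain ⟨r, hr, hsub⟩ := hUopen x₀ hx₀U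
      refine ⟨r, hr, fun z hz => hball ?_⟩
      obtain ⟨hz1, hz2⟩ := hsub hz
      have h1 : ρ y z < ρ x₀ y + ε := hz1
      have h2 : ¬ ρ y z < ρ x₀ y - ε / 2 := fun hlt => hz2 (subset_closure hlt)
      push_neg at h2
      have h3 : ρ y z = ρ z y := hsymm y z
      simp only [Set.mem_preimage, Metric.mem_ball, Real.dist_eq, abs_lt]
      constructor <;> linarith
  · intro H x r hr
    letI : TopologicalSpace Ω := ballTopology ρ
    have hcont := H x
    constructor
    · have hset : {y | ρ x y < r} = (fun z => ρ z x) ⁻¹' (Set.Iio r) := by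
        ext z; simp [hsymm x z]
      rw [hset]; exact isOpen_Iio.preimage hcont
    · have hclosed : IsClosed {y | ρ x y ≤ r} := by
        have hset : {y | ρ x y ≤ r} = (fun z => ρ z x) ⁻¹' (Set.Iic r) := by
          ext z; simp [hsymm x z]
        rw [hset]; exact isClosed_Iic.preimage hcont
      refine closure_minimal (fun z hz => ?_) hclosed
      simp only [Set.mem_setOf_eq] at hz ⊢
      exact le_of_lt hz
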